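/- The set Λ = {θ ∈ Φ_G⁺ : ⟨θ, δ_K⟩ < 0} has exactly one element, namely e_{m/2} − e_{m/2+1}, and ⟨e_{m/2} − e_{m/2+1}, δ_K⟩ = −1/(2(m+2)); moreover ‖δ_G − δ_K‖² = m/(m+2). Consequently 2‖δ_G − δ_K‖² + 4 Σ_{θ∈Λ} ⟨θ, δ_K⟩ + (4m)/8 = (m² + 6m − 4)/(2(m+2)). -/

import Mathlib

open Finset

/-- Standard basis vector `e i` of `ℝ^{m/2+2}`. -/
noncomputable def eVec (m : ℕ) (i : Fin (m / 2 + 2)) : Fin (m / 2 + 2) → ℝ := Pi.single i 1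

/-- The inner product induced by the Killing form of `Spin_{m+4}` sign-changed. -/
noncomputable def ipGr4 (m : ℕ) (μ ν : Fin (m / 2 + 2) → ℝ) : ℝ :=
  (1 / (2 * ((m : ℝ) + 2))) * ∑ k, μ k * ν k

/-- The positive roots of `Spin_{m+4}`: the `e_i − e_j` and `e_i + e_j` for `i < j`. -/
noncomputable def PosRootsGr4 (m : ℕ) : Finset (Fin (m / 2 + 2) → ℝ) :=
  ((univ ×ˢ univ : Finset (Fin (m / 2 + 2) × Fin (m / 2 + 2))).filter fun p => p.1 < p.2).image
      (fun p => eVec m p.1 - eVec m p.2) ∪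
    ((univ ×ˢ univ : Finset (Fin (m / 2 + 2) × Fin (m / 2 + 2))).filter fun p => p.1 < p.2).image
      (fun p => eVec m p.1 + eVec m p.2)

/-- `δ_G = (m/2+1, m/2, …, 1, 0)`. -/
noncomputable def deltaGGr4 (m : ℕ) : Fin (m / 2 + 2) → ℝ := fun k => ((m : ℝ) / 2 + 1) - (k : ℕ)

/-- `δ_K = Σ_{k=1}^{m/2} (m/2 − k) e_k + e_{m/2+1} = (m/2−1, m/2−2, …, 1, 0, 1, 0)`. -/
noncomputable def deltaKGr4 (m : ℕ) : Fin (m / 2 + 2) → ℝ := fun k =>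
  if (k : ℕ) = m / 2 then 1 else if (k : ℕ) = m / 2 + 1 then 0 else (m : ℝ) / 2 - 1 - (k : ℕ)

/-- The set `Λ = {θ ∈ Φ_G⁺ : ⟨θ, δ_K⟩ < 0}`. -/
noncomputable def LambdaGr4 (m : ℕ) : Finset (Fin (m / 2 + 2) → ℝ) :=
  (PosRootsGr4 m).filter fun θ => ipGr4 m θ (deltaKGr4 m) < 0

/-!
`δ_K` takes the values `m/2 − 1, …, 1, 0` on the first `m/2` coordinates and then `1, 0`: it is
nonnegative and decreasing except for the single ascent from coordinate `m/2` to `m/2 + 1`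
(1-based). Since `⟨e_i ± e_j, δ_K⟩` is a positive multiple of `δ_K(i) ± δ_K(j)`, the only positive
root pairing negatively with `δ_K` is the difference across that ascent. Coordinatewise
`δ_G − δ_K = (2, …, 2, 0, 0)`, so `‖δ_G − δ_K‖² = 4 (m/2) / (2(m+2))`.
-/

open Matrix

lemma natCast_div_two_of_even {K : Type*} [DivisionRing K] [CharZero K] {n : ℕ} (hn : Even n) :
    ((n / 2 : ℕ) : K) = (n : K) / 2 := by
  exact_mod_cast Nat.cast_div_charZero (K := K) (even_iff_two_dvd.1 hn)

section

variable {m : ℕ}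

lemma ipGr4_neg_iff {μ ν : Fin (m / 2 + 2) → ℝ} : ipGr4 m μ ν < 0 ↔ μ ⬝ᵥ ν < 0 := by
  show (1 / (2 * ((m : ℝ) + 2))) • (μ ⬝ᵥ ν) < 0 ↔ _
  exact smul_neg_iff_of_pos_left (by positivity)

lemma eVec_sub_eVec_dotProduct (i j : Fin (m / 2 + 2)) (ν : Fin (m / 2 + 2) → ℝ) :
    (eVec m i - eVec m j) ⬝ᵥ ν = ν i - ν j := by
  simp [eVec, sub_dotProduct, single_dotProduct]

lemma eVec_add_eVec_dotProduct (i j : Fin (m / 2 + 2)) (ν : Fin (m / 2 + 2) → ℝ) :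
    (eVec m i + eVec m j) ⬝ᵥ ν = ν i + ν j := by
  simp [eVec, add_dotProduct, single_dotProduct]

lemma deltaGGr4_eq_natCast (hme : Even m) (k : Fin (m / 2 + 2)) :
    deltaGGr4 m k = ((m / 2 + 1 - k : ℕ) : ℝ) := by
  rw [deltaGGr4, Nat.cast_sub (by omega), ← natCast_div_two_of_even hme]
  push_cast
  ring

/-- The truncated subtraction gives the value `0` at the last coordinate. -/
lemma deltaKGr4_eq_natCast (hme : Even m) (k : Fin (m / 2 + 2)) :
    deltaKGr4 m k = ((if (k : ℕ) = m / 2 then 1 else m / 2 - 1 - k : ℕ) : ℝ) := by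
  rw [deltaKGr4, ← natCast_div_two_of_even hme]
  have hk := k.isLt
  split_ifs with h₁ h₂
  · simp
  · simp [show m / 2 - 1 - (k : ℕ) = 0 by omega]
  · rw [Nat.cast_sub (by omega), Nat.cast_sub (by omega)]
    push_cast
    ring

lemma deltaKGr4_nonneg (hme : Even m) (k : Fin (m / 2 + 2)) : 0 ≤ deltaKGr4 m k := by
  rw [deltaKGr4_eq_natCast hme]
  positivity

lemma deltaKGr4_lt_deltaKGr4_iff (hme : Even m) {i j : Fin (m / 2 + 2)} (hij : i < j) :
    deltaKGr4 m i < deltaKGr4 m j ↔ (i : ℕ) + 1 = m / 2 ∧ (j : ℕ) = m / 2 := by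
  rw [deltaKGr4_eq_natCast hme, deltaKGr4_eq_natCast hme, Nat.cast_lt]
  rw [Fin.lt_def] at hij
  split_ifs <;> omega

lemma LambdaGr4_eq (hme : Even m) (i j : Fin (m / 2 + 2)) (hi : (i : ℕ) + 1 = m / 2)
    (hj : (j : ℕ) = m / 2) : LambdaGr4 m = {eVec m i - eVec m j} := by
  ext θ
  simp only [LambdaGr4, PosRootsGr4, mem_filter, mem_union, mem_image, mem_product, mem_univ,
    true_and, Prod.exists, mem_singleton, ipGr4_neg_iff]
  constructor
  · rintro ⟨⟨i', j', hij, rfl⟩ | ⟨i', j', -, rfl⟩, hneg⟩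
    · rw [eVec_sub_eVec_dotProduct, sub_neg, deltaKGr4_lt_deltaKGr4_iff hme hij] at hneg
      rw [Fin.ext (show (i' : ℕ) = i by omega), Fin.ext (show (j' : ℕ) = j by omega)]
    · rw [eVec_add_eVec_dotProduct] at hneg
      linarith [deltaKGr4_nonneg hme i', deltaKGr4_nonneg hme j']
  · rintro rfl
    have hij : i < j := by
      rw [Fin.lt_def]
      omega
    refine ⟨Or.inl ⟨i, j, hij, rfl⟩, ?_⟩
    rw [eVec_sub_eVec_dotProduct, sub_neg, deltaKGr4_lt_deltaKGr4_iff hme hij]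
    exact ⟨hi, hj⟩

lemma ipGr4_eVec_sub_eVec_deltaKGr4 (hme : Even m) (i j : Fin (m / 2 + 2))
    (hi : (i : ℕ) + 1 = m / 2) (hj : (j : ℕ) = m / 2) :
    ipGr4 m (eVec m i - eVec m j) (deltaKGr4 m) = -(1 / (2 * ((m : ℝ) + 2))) := by
  rw [ipGr4, ← dotProduct, eVec_sub_eVec_dotProduct, deltaKGr4_eq_natCast hme,
    deltaKGr4_eq_natCast hme, if_neg (by omega), if_pos hj, show m / 2 - 1 - (i : ℕ) = 0 by omega]
  simp

lemma deltaGGr4_sub_deltaKGr4_apply (hme : Even m) (k : Fin (m / 2 + 2)) :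
    (deltaGGr4 m - deltaKGr4 m) k = if (k : ℕ) < m / 2 then 2 else 0 := by
  rw [Pi.sub_apply, deltaGGr4_eq_natCast hme, deltaKGr4_eq_natCast hme, sub_eq_iff_eq_add]
  split_ifs <;> norm_cast <;> omega

lemma ipGr4_deltaGGr4_sub_deltaKGr4 (hme : Even m) :
    ipGr4 m (deltaGGr4 m - deltaKGr4 m) (deltaGGr4 m - deltaKGr4 m) = (m : ℝ) / ((m : ℝ) + 2) := by
  have hsum : ∑ k, (deltaGGr4 m - deltaKGr4 m) k * (deltaGGr4 m - deltaKGr4 m) k =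
      4 * ((m / 2 : ℕ) : ℝ) := by
    have hsq (k : Fin (m / 2 + 2)) : (deltaGGr4 m - deltaKGr4 m) k * (deltaGGr4 m - deltaKGr4 m) k =
        if (k : ℕ) < m / 2 then 4 else 0 := by
      rw [deltaGGr4_sub_deltaKGr4_apply hme]
      split_ifs <;> norm_num
    rw [sum_congr rfl fun k _ => hsq k, ← sum_filter, sum_const, Fin.card_filter_val_lt,
      min_eq_right (by omega), nsmul_eq_mul, mul_comm]
  rw [ipGr4, hsum, natCast_div_two_of_even hme]
  field_simp
  ring

end

/-- For `Gr̃_4(ℝ^{m+4}) = Spin_{m+4}/(Spin_m·Spin_4)`, `m` even `≥ 4`: `Λ` has exactly one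
element, `e_{m/2} − e_{m/2+1}` (1-based; 0-based indices `m/2−1` and `m/2`), with
`⟨e_{m/2} − e_{m/2+1}, δ_K⟩ = −1/(2(m+2))`; moreover `‖δ_G − δ_K‖² = m/(m+2)`; consequently
`2‖δ_G − δ_K‖² + 4Σ_{θ∈Λ}⟨θ,δ_K⟩ + (4m)/8 = (m²+6m−4)/(2(m+2))`. -/
theorem stmt11 (m : ℕ) (hm : 4 ≤ m) (hme : Even m) :
    LambdaGr4 m =
      {eVec m ⟨m / 2 - 1, by omega⟩ - eVec m ⟨m / 2, by omega⟩} ∧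
    ipGr4 m (eVec m ⟨m / 2 - 1, by omega⟩ - eVec m ⟨m / 2, by omega⟩) (deltaKGr4 m) =
      -(1 / (2 * ((m : ℝ) + 2))) ∧
    ipGr4 m (deltaGGr4 m - deltaKGr4 m) (deltaGGr4 m - deltaKGr4 m) = (m : ℝ) / ((m : ℝ) + 2) ∧
    2 * ipGr4 m (deltaGGr4 m - deltaKGr4 m) (deltaGGr4 m - deltaKGr4 m) +
        4 * (∑ θ ∈ LambdaGr4 m, ipGr4 m θ (deltaKGr4 m)) + (4 * (m : ℝ)) / 8 =
      ((m : ℝ) ^ 2 + 6 * (m : ℝ) - 4) / (2 * ((m : ℝ) + 2)) := by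
  have hi : ((⟨m / 2 - 1, by omega⟩ : Fin (m / 2 + 2)) : ℕ) + 1 = m / 2 := by
    show m / 2 - 1 + 1 = m / 2
    omega
  have hΛ := LambdaGr4_eq hme _ ⟨m / 2, by omega⟩ hi rfl
  have hpair := ipGr4_eVec_sub_eVec_deltaKGr4 hme _ ⟨m / 2, by omega⟩ hi rfl
  have hnorm := ipGr4_deltaGGr4_sub_deltaKGr4 hme
  refine ⟨hΛ, hpair, hnorm, ?_⟩
  rw [hnorm, hΛ, sum_singleton, hpair]
  field_simp
  ring
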